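/- Under the hypotheses of the n-nomial model (n > 2, m₁ > ... > mₙ > 0, m_{s−1} > 1+r > m_s, 1+r ≠ mₙ), the lower envelope Q̲ can be written as Q̲ = αN₁ + (1−α)N₂, where α = ((1+r)−mₙ)/(m₁−mₙ) ∈ (0,1) and N₁, N₂ are necessity measures on the power set of Ω (capacities satisfying N(A∩B) = min{N(A), N(B)} for all A, B). -/

import Mathlib

/-! Under a probability `q` with mean `c`, a Markov-type inequality bounds `q A` from below in terms
of the extreme values of `m` on `A` and off `A`, and a measure on two points attains the bound.
So the lower envelope of `A` only depends on `e = min Aᶜ` and `E = max Aᶜ`: it is the weight at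
`⊥` of the pair `{⊥, e}` if `m < c` on `Aᶜ`, the weight at `⊤` of `{⊤, E}` if `c < m` on `Aᶜ`,
and `0` otherwise. After normalising by `α` and `1 - α`, the first term is a monotone function
of `min Aᶜ` and the second an antitone function of `max Aᶜ`; both are necessity measures because
`(A ∩ B)ᶜ = Aᶜ ∪ Bᶜ` and `min`, `max` turn unions into `min`, `max`. -/

/-- A necessity measure on the power set of `Fin n`. -/
def IsNecessity {n : ℕ} (N : Finset (Fin n) → ℝ) : Prop :=
  N ∅ = 0 ∧ N Finset.univ = 1 ∧ (∀ A B : Finset (Fin n), A ⊆ B → N A ≤ N B) ∧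
    ∀ A B : Finset (Fin n), N (A ∩ B) = min (N A) (N B)

open Finset

section TwoPoint

variable {ι : Type*}

/-- The mass at `i` of the probability measure on `{i, j}` under which `m` has mean `c`. -/
noncomputable def twoPointWeight (m : ι → ℝ) (c : ℝ) (i j : ι) : ℝ := (c - m j) / (m i - m j)

variable {m : ι → ℝ} {c : ℝ} {i j j' : ι}

lemma twoPointWeight_neg : twoPointWeight (-m) (-c) i j = twoPointWeight m c i j := by
  rw [twoPointWeight, twoPointWeight, ← neg_div_neg_eq]
  simp only [Pi.neg_apply, neg_sub, sub_neg_eq_add, neg_add_eq_sub]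

lemma twoPointWeight_add_twoPointWeight (h : m j ≠ m i) :
    twoPointWeight m c i j + twoPointWeight m c j i = 1 := by
  have : m i - m j ≠ 0 := sub_ne_zero.2 h.symm
  have : m j - m i ≠ 0 := sub_ne_zero.2 h
  rw [twoPointWeight, twoPointWeight]
  field_simp
  ring

lemma twoPointWeight_mean (h : m j ≠ m i) :
    m i * twoPointWeight m c i j + m j * twoPointWeight m c j i = c := by
  have : m i - m j ≠ 0 := sub_ne_zero.2 h.symm
  have : m j - m i ≠ 0 := sub_ne_zero.2 h
  rw [twoPointWeight, twoPointWeight]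
  field_simp
  ring

lemma twoPointWeight_pos (hj : m j < c) (hi : c < m i) : 0 < twoPointWeight m c i j :=
  div_pos (sub_pos.2 hj) (sub_pos.2 (hj.trans hi))

lemma twoPointWeight_lt_one (hj : m j < c) (hi : c < m i) : twoPointWeight m c i j < 1 :=
  (div_lt_one (sub_pos.2 (hj.trans hi))).2 (sub_lt_sub_right hi _)

lemma twoPointWeight_pos_of_lt (hi : m i < c) (hj : c < m j) : 0 < twoPointWeight m c i j := by
  simpa only [twoPointWeight_neg] using
    twoPointWeight_pos (m := -m) (c := -c) (neg_lt_neg hj) (neg_lt_neg hi)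

lemma twoPointWeight_le_twoPointWeight (hj : m j < m i) (hc : c ≤ m i) (hjj' : m j' ≤ m j) :
    twoPointWeight m c i j ≤ twoPointWeight m c i j' := by
  rw [twoPointWeight, twoPointWeight, div_le_div_iff₀ (by linarith) (by linarith)]
  nlinarith [mul_nonneg (sub_nonneg.2 hjj') (sub_nonneg.2 hc)]

lemma twoPointWeight_le_twoPointWeight_of_lt (hj : m i < m j) (hc : m i ≤ c)
    (hjj' : m j ≤ m j') : twoPointWeight m c i j ≤ twoPointWeight m c i j' := by
  simpa only [twoPointWeight_neg] using twoPointWeight_le_twoPointWeight (m := -m) (c := -c)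
    (neg_lt_neg hj) (neg_le_neg hc) (neg_le_neg hjj')

end TwoPoint

section MartingaleMasses

variable {ι : Type*} {m : ι → ℝ} {c : ℝ} {i j : ι} [Fintype ι]

def martingaleMasses (m : ι → ℝ) (c : ℝ) (A : Finset ι) : Set ℝ :=
  {x | ∃ q : ι → ℝ, (∀ k, 0 ≤ q k) ∧ (∑ k, q k) = 1 ∧ (∑ k, m k * q k) = c ∧ x = ∑ k ∈ A, q k}

variable {A : Finset ι}

lemma martingaleMasses_neg : martingaleMasses (-m) (-c) A = martingaleMasses m c A := by
  ext x
  simp only [martingaleMasses, Set.mem_ofPred_eq, Pi.neg_apply, neg_mul, sum_neg_distrib, neg_inj]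

lemma ite_add_ite_mem_martingaleMasses [DecidableEq ι] (hj : m j < c) (hi : c < m i)
    (A : Finset ι) :
    (if i ∈ A then twoPointWeight m c i j else 0) + (if j ∈ A then twoPointWeight m c j i else 0)
      ∈ martingaleMasses m c A := by
  have hij : m j ≠ m i := (hj.trans hi).ne
  refine ⟨Pi.single i (twoPointWeight m c i j) + Pi.single j (twoPointWeight m c j i),
    fun k => ?_, ?_, ?_, ?_⟩
  · have := (twoPointWeight_pos hj hi).le
    have := (twoPointWeight_pos_of_lt hj hi).le
    simp only [Pi.add_apply, Pi.single_apply]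
    positivity
  · simp only [Pi.add_apply, sum_add_distrib, sum_pi_single', mem_univ, if_true]
    exact twoPointWeight_add_twoPointWeight hij
  · simp only [Pi.add_apply, mul_add, sum_add_distrib, Pi.single_apply, mul_ite, mul_zero,
      sum_ite_eq', mem_univ, if_true]
    exact twoPointWeight_mean hij
  · simp only [Pi.add_apply, sum_add_distrib, sum_pi_single']

lemma one_isLeast_martingaleMasses_univ (hj : m j < c) (hi : c < m i) :
    IsLeast (martingaleMasses m c univ) 1 := by
  classical
  refine ⟨?_, fun x ⟨q, _, hq, _, hx⟩ => (hx.trans hq).ge⟩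
  simpa only [mem_univ, if_true, twoPointWeight_add_twoPointWeight (hj.trans hi).ne]
    using ite_add_ite_mem_martingaleMasses hj hi univ

lemma twoPointWeight_le_of_mem_martingaleMasses {x : ℝ} (hx : x ∈ martingaleMasses m c A)
    (hji : m j < m i) (hmi : ∀ k, m k ≤ m i) (hmj : ∀ k ∉ A, m k ≤ m j) :
    twoPointWeight m c i j ≤ x := by
  classical
  obtain ⟨q, hq0, hq1, hqm, rfl⟩ := hx
  have hmass := sum_add_sum_compl A q
  have hmean := sum_add_sum_compl A (fun k => m k * q k)
  have hin : ∑ k ∈ A, m k * q k ≤ m i * ∑ k ∈ A, q k := by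
    rw [mul_sum]
    exact sum_le_sum fun k _ => mul_le_mul_of_nonneg_right (hmi k) (hq0 k)
  have hout : ∑ k ∈ Aᶜ, m k * q k ≤ m j * ∑ k ∈ Aᶜ, q k := by
    rw [mul_sum]
    exact sum_le_sum fun k hk => mul_le_mul_of_nonneg_right (hmj k (mem_compl.1 hk)) (hq0 k)
  rw [twoPointWeight, div_le_iff₀ (sub_pos.2 hji)]
  have hout' : ∑ k ∈ Aᶜ, q k = 1 - ∑ k ∈ A, q k := by linarith
  rw [hout'] at hout
  linarith

lemma isLeast_martingaleMasses_of_max (hi : i ∈ A) (hj : j ∉ A) (hjc : m j < c) (hci : c < m i)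
    (hmi : ∀ k, m k ≤ m i) (hmj : ∀ k ∉ A, m k ≤ m j) :
    IsLeast (martingaleMasses m c A) (twoPointWeight m c i j) := by
  classical
  refine ⟨?_, fun x hx => twoPointWeight_le_of_mem_martingaleMasses hx (hjc.trans hci) hmi hmj⟩
  simpa only [hi, hj, if_true, if_false, add_zero] using ite_add_ite_mem_martingaleMasses hjc hci A

lemma isLeast_martingaleMasses_of_min (hj : j ∈ A) (hi : i ∉ A) (hjc : m j < c) (hci : c < m i)
    (hmj : ∀ k, m j ≤ m k) (hmi : ∀ k ∉ A, m i ≤ m k) :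
    IsLeast (martingaleMasses m c A) (twoPointWeight m c j i) := by
  simpa only [martingaleMasses_neg, twoPointWeight_neg] using
    isLeast_martingaleMasses_of_max (m := -m) (c := -c) hj hi (neg_lt_neg hci) (neg_lt_neg hjc)
      (fun k => neg_le_neg (hmj k)) (fun k hk => neg_le_neg (hmi k hk))

lemma zero_isLeast_martingaleMasses (hi : i ∉ A) (hj : j ∉ A) (hjc : m j < c) (hci : c < m i) :
    IsLeast (martingaleMasses m c A) 0 := by
  classical
  refine ⟨?_, fun x ⟨q, hq0, _, _, hx⟩ => hx ▸ sum_nonneg fun k _ => hq0 k⟩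
  simpa only [hi, hj, if_false, add_zero] using ite_add_ite_mem_martingaleMasses hjc hci A

end MartingaleMasses

lemma monotone_ite_zero {ι : Type*} [Preorder ι] {p : ι → Prop} [DecidablePred p] {f : ι → ℝ}
    (hp : ∀ ⦃a b⦄, a ≤ b → p a → p b) (hf : ∀ ⦃a b⦄, a ≤ b → p a → f a ≤ f b)
    (hf0 : ∀ a, p a → 0 ≤ f a) : Monotone fun k => if p k then f k else 0 := by
  intro a b hab
  by_cases ha : p a
  · simp only [ha, hp hab ha, if_true]
    exact hf hab ha
  · by_cases hb : p b
    · simpa only [ha, hb, if_true, if_false] using hf0 b hb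
    · simp only [ha, hb, if_false, le_refl]

section Chain

variable {n : ℕ}

noncomputable def minComplNecessity (φ : Fin n → ℝ) (A : Finset (Fin n)) : ℝ :=
  WithTop.recTopCoe 1 φ Aᶜ.min

noncomputable def maxComplNecessity (ψ : Fin n → ℝ) (A : Finset (Fin n)) : ℝ :=
  WithBot.recBotCoe 1 ψ Aᶜ.max

variable {φ ψ : Fin n → ℝ}

lemma minComplNecessity_univ : minComplNecessity φ univ = 1 := by
  simp [minComplNecessity]

lemma maxComplNecessity_univ : maxComplNecessity ψ univ = 1 := by
  simp [maxComplNecessity]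

lemma minComplNecessity_of_min_eq {A : Finset (Fin n)} {e : Fin n} (h : Aᶜ.min = e) :
    minComplNecessity φ A = φ e := by
  rw [minComplNecessity, h]
  rfl

lemma maxComplNecessity_of_max_eq {A : Finset (Fin n)} {e : Fin n} (h : Aᶜ.max = e) :
    maxComplNecessity ψ A = ψ e := by
  rw [maxComplNecessity, h]
  rfl

lemma isNecessity_minComplNecessity [NeZero n] (hφ : Monotone φ) (hφ1 : ∀ k, φ k ≤ 1)
    (hφ0 : φ ⊥ = 0) : IsNecessity (minComplNecessity φ) := by
  have hG : Monotone (WithTop.recTopCoe 1 φ : WithTop (Fin n) → ℝ) :=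
    WithTop.monotone_iff.2 ⟨hφ, hφ1⟩
  refine ⟨?_, minComplNecessity_univ, fun A B hAB => hG (min_mono (compl_subset_compl.2 hAB)),
    fun A B => ?_⟩
  · rw [← hφ0]
    exact minComplNecessity_of_min_eq (by simp)
  · simp only [minComplNecessity, compl_inter, min_union]
    exact hG.map_min

lemma isNecessity_maxComplNecessity [NeZero n] (hψ : Antitone ψ) (hψ1 : ∀ k, ψ k ≤ 1)
    (hψ0 : ψ ⊤ = 0) : IsNecessity (maxComplNecessity ψ) := by
  have hH : Antitone (WithBot.recBotCoe 1 ψ : WithBot (Fin n) → ℝ) :=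
    WithBot.monotone_iff (β := ℝᵒᵈ).2 ⟨hψ, hψ1⟩
  refine ⟨?_, maxComplNecessity_univ, fun A B hAB => hH (max_mono (compl_subset_compl.2 hAB)),
    fun A B => ?_⟩
  · rw [← hψ0]
    exact maxComplNecessity_of_max_eq (by simp)
  · simp only [maxComplNecessity, compl_inter, max_union]
    exact hH.map_max

end Chain

section Model

variable {n : ℕ} [NeZero n] {m : Fin n → ℝ} {c : ℝ}

/-- `α * necessityBelow m c A` is the lower envelope of `A` when `m < c` on `Aᶜ`: the weight at `⊥`
of the extreme pair `{⊥, min Aᶜ}`, normalised by its largest value `α = twoPointWeight m c ⊥ ⊤`.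
Symmetrically for `necessityAbove`, `max Aᶜ` and `1 - α`. -/
noncomputable def necessityBelow (m : Fin n → ℝ) (c : ℝ) : Finset (Fin n) → ℝ :=
  minComplNecessity fun k =>
    if m k < c then twoPointWeight m c ⊥ k / twoPointWeight m c ⊥ ⊤ else 0

noncomputable def necessityAbove (m : Fin n → ℝ) (c : ℝ) : Finset (Fin n) → ℝ :=
  maxComplNecessity fun k =>
    if c < m k then twoPointWeight m c ⊤ k / twoPointWeight m c ⊤ ⊥ else 0

variable (hm : Antitone m) (hbot : c < m ⊥) (htop : m ⊤ < c)
include hm hbot htop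

lemma isNecessity_necessityBelow : IsNecessity (necessityBelow m c) := by
  have hα := twoPointWeight_pos htop hbot
  have hweight : ∀ ⦃a b⦄, a ≤ b → m a < c →
      twoPointWeight m c ⊥ a ≤ twoPointWeight m c ⊥ b := fun a b hab ha =>
    twoPointWeight_le_twoPointWeight (ha.trans hbot) hbot.le (hm hab)
  refine isNecessity_minComplNecessity ?_ (fun k => ?_) (if_neg hbot.not_gt)
  · refine monotone_ite_zero (fun a b hab ha => (hm hab).trans_lt ha)
      (fun a b hab ha => div_le_div_of_nonneg_right (hweight hab ha) hα.le)
      (fun a ha => div_nonneg (twoPointWeight_pos ha hbot).le hα.le)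
  · split_ifs with hk
    · exact (div_le_one hα).2 (hweight le_top hk)
    · exact zero_le_one

lemma isNecessity_necessityAbove : IsNecessity (necessityAbove m c) := by
  have hβ := twoPointWeight_pos_of_lt htop hbot
  have hweight : ∀ ⦃a b⦄, b ≤ a → c < m a →
      twoPointWeight m c ⊤ a ≤ twoPointWeight m c ⊤ b := fun a b hab ha =>
    twoPointWeight_le_twoPointWeight_of_lt (htop.trans ha) htop.le (hm hab)
  refine isNecessity_maxComplNecessity ?_ (fun k => ?_) (if_neg htop.not_gt)
  · have := monotone_ite_zero (p := fun a : (Fin n)ᵒᵈ => c < m (OrderDual.ofDual a))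
      (fun a b hab ha => ha.trans_le (hm hab))
      (fun a b hab ha => div_le_div_of_nonneg_right (hweight hab ha) hβ.le)
      (fun a ha => div_nonneg (twoPointWeight_pos_of_lt htop ha).le hβ.le)
    exact fun a b hab => this (OrderDual.toDual_le_toDual.2 hab)
  · split_ifs with hk
    · exact (div_le_one hβ).2 (hweight bot_le hk)
    · exact zero_le_one

lemma isLeast_martingaleMasses_necessityBelow_necessityAbove (hc : ∀ k, m k ≠ c)
    (A : Finset (Fin n)) :
    IsLeast (martingaleMasses m c A) (twoPointWeight m c ⊥ ⊤ * necessityBelow m c A +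
      (1 - twoPointWeight m c ⊥ ⊤) * necessityAbove m c A) := by
  have hα := (twoPointWeight_pos htop hbot).ne'
  have hβ := (twoPointWeight_pos_of_lt htop hbot).ne'
  have hαβ : 1 - twoPointWeight m c ⊥ ⊤ = twoPointWeight m c ⊤ ⊥ := by
    rw [← twoPointWeight_add_twoPointWeight (htop.trans hbot).ne, add_sub_cancel_left]
  rcases Aᶜ.eq_empty_or_nonempty with hA | hA
  · rw [compl_eq_empty_iff] at hA
    subst hA
    rw [necessityBelow, necessityAbove, minComplNecessity_univ, maxComplNecessity_univ, mul_one,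
      mul_one, add_sub_cancel]
    exact one_isLeast_martingaleMasses_univ htop hbot
  set e := Aᶜ.min' hA
  set E := Aᶜ.max' hA
  have heA : e ∉ A := mem_compl.1 (Aᶜ.min'_mem hA)
  have hEA : E ∉ A := mem_compl.1 (Aᶜ.max'_mem hA)
  have he : ∀ k ∉ A, m k ≤ m e := fun k hk => hm (Aᶜ.min'_le k (mem_compl.2 hk))
  have hE : ∀ k ∉ A, m E ≤ m k := fun k hk => hm (Aᶜ.le_max' k (mem_compl.2 hk))
  rw [necessityBelow, necessityAbove, minComplNecessity_of_min_eq (coe_min' hA).symm,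
    maxComplNecessity_of_max_eq (coe_max' hA).symm, hαβ]
  rcases (hc e).lt_or_gt with hec | hce
  · have hbotA : ⊥ ∈ A := by_contra fun h => (he ⊥ h).not_gt (hec.trans hbot)
    rw [if_pos hec, if_neg (hE e heA |>.trans_lt hec).not_gt, mul_div_cancel₀ _ hα, mul_zero,
      add_zero]
    exact isLeast_martingaleMasses_of_max hbotA heA hec hbot (fun k => hm bot_le) he
  rcases (hc E).lt_or_gt with hEc | hcE
  · rw [if_neg hce.not_gt, if_neg hEc.not_gt, mul_zero, mul_zero, add_zero]
    exact zero_isLeast_martingaleMasses heA hEA hEc hce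
  · have htopA : ⊤ ∈ A := by_contra fun h => (hE ⊤ h).not_gt (htop.trans hcE)
    rw [if_neg hce.not_gt, if_pos hcE, mul_div_cancel₀ _ hβ, mul_zero, zero_add]
    exact isLeast_martingaleMasses_of_min htopA hEA htop hcE (fun k => hm le_top) hE

end Model

/-- The lower envelope of the martingale measures in the n-nomial model is a strict
convex combination `α N₁ + (1-α) N₂` of two necessity measures, with
`α = ((1+r) - mₙ)/(m₁ - mₙ) ∈ (0,1)`. -/
theorem lower_envelope_convex_combination_of_necessities (n : ℕ) (hn : 2 < n)
    (m : Fin n → ℝ) (hm : StrictAnti m) (r : ℝ)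
    (s : Fin n)
    (h1 : 1 + r < m ⟨s.val - 1, Nat.lt_of_le_of_lt (Nat.sub_le _ _) s.isLt⟩)
    (h2 : m s < 1 + r)
    (Qlow : Finset (Fin n) → ℝ)
    (hQlow : ∀ A : Finset (Fin n),
      IsLeast {x : ℝ | ∃ q : Fin n → ℝ, (∀ k, 0 ≤ q k) ∧ (∑ k, q k) = 1 ∧
        (∑ k, m k * q k) = 1 + r ∧ x = ∑ k ∈ A, q k} (Qlow A)) :
    let α : ℝ := ((1 + r) - m ⟨n - 1, by omega⟩) / (m ⟨0, by omega⟩ - m ⟨n - 1, by omega⟩)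
    0 < α ∧ α < 1 ∧
      ∃ N₁ N₂ : Finset (Fin n) → ℝ, IsNecessity N₁ ∧ IsNecessity N₂ ∧
        ∀ A : Finset (Fin n), Qlow A = α * N₁ A + (1 - α) * N₂ A := by
  intro α
  have : NeZero n := ⟨by omega⟩
  have hα : α = twoPointWeight m (1 + r) ⊥ ⊤ := rfl
  have hbot : 1 + r < m ⊥ := h1.trans_le (hm.antitone bot_le)
  have htop : m ⊤ < 1 + r := (hm.antitone le_top).trans_lt h2
  have hc : ∀ k, m k ≠ 1 + r := by
    intro k
    rcases lt_or_ge k s with hks | hsk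
    · exact (h1.trans_le (hm.antitone (Fin.le_def.2 (show k.val ≤ s.val - 1 by omega)))).ne'
    · exact ((hm.antitone hsk).trans_lt h2).ne
  refine ⟨hα ▸ twoPointWeight_pos htop hbot, hα ▸ twoPointWeight_lt_one htop hbot,
    necessityBelow m (1 + r), necessityAbove m (1 + r),
    isNecessity_necessityBelow hm.antitone hbot htop,
    isNecessity_necessityAbove hm.antitone hbot htop, fun A => (hQlow A).unique
      (isLeast_martingaleMasses_necessityBelow_necessityAbove hm.antitone hbot htop hc A)⟩
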